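/- Let λ̄, μ̄₁, μ̄₂, μ̄₃ ∈ ℝ with μ̄₁, μ̄₂, μ̄₃ > 0, λ̄+2μ̄₁ > 0, λ̄+2μ̄₂ > 0 and λ̄+2μ̄₃ = 0 (the Cauchy/Gutiérrez degeneracy). For k = (k₁,k₂) ∈ ℝ² define A(k) := !![(λ̄+2μ̄₁)k₁² + μ̄₂k₂², (λ̄+μ̄₂)k₁k₂; (λ̄+μ̄₂)k₁k₂, μ̄₂k₁²]. Then for every k ≠ 0 the matrix A(k) is singular (det A(k) = 0) if and only if k₁ = 0; moreover for k = (0,1) one has A(k) = !![μ̄₂, 0; 0, 0], whose kernel is spanned by e₂ = (0,1). Hence the only direction admitting a zero-speed wave is the direction of lamination e₁, and the corresponding oscillation η = e₂ is transverse, so no longitudinal wave can propagate in that direction. -/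
import Mathlib


open Matrix

/-- The acoustic (Christoffel) matrix of the 2D orthorombic material in the
degenerate (Cauchy/Gutiérrez) case `λ̄ + 2μ̄₃ = 0`. -/
noncomputable def acousticDeg (lb mb1 mb2 : ℝ) (k : Fin 2 → ℝ) :
    Matrix (Fin 2) (Fin 2) ℝ :=
  !![(lb + 2 * mb1) * k 0 ^ 2 + mb2 * k 1 ^ 2, (lb + mb2) * k 0 * k 1;
     (lb + mb2) * k 0 * k 1, mb2 * k 0 ^ 2]

theorem stmt13 (lb mb1 mb2 mb3 : ℝ)
    (hm1 : 0 < mb1) (hm2 : 0 < mb2) (hm3 : 0 < mb3)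
    (h1 : 0 < lb + 2 * mb1) (h2 : 0 < lb + 2 * mb2) (h3 : lb + 2 * mb3 = 0) :
    (∀ k : Fin 2 → ℝ, k ≠ 0 → ((acousticDeg lb mb1 mb2 k).det = 0 ↔ k 0 = 0)) ∧
    acousticDeg lb mb1 mb2 ![0, 1] = !![mb2, 0; 0, 0] ∧
    { η : Fin 2 → ℝ | (acousticDeg lb mb1 mb2 ![0, 1]) *ᵥ η = 0 }
      = { η : Fin 2 → ℝ | ∃ t : ℝ, η = t • ![(0 : ℝ), 1] } := by
  have hlb : lb < 0 := by linarith
  refine ⟨?_, ?_, ?_⟩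
  · intro k hk
    rw [acousticDeg, Matrix.det_fin_two_of]
    constructor
    · intro hdet
      by_contra h0
      have hk0 : k 0 ^ 2 > 0 := by positivity
      nlinarith [sq_nonneg (k 1), mul_pos h1 hm2, mul_pos (mul_pos hm2 hk0) hk0,
        mul_pos (neg_pos.mpr hlb) h2, sq_nonneg (k 0 * k 1)]
    · intro h0
      rw [h0]; ring
  · rw [acousticDeg]
    norm_num
  · ext η
    simp only [Set.mem_setOf_eq, acousticDeg]
    norm_num
    constructor
    · intro h
      have h0 : η 0 = 0 := h.1.resolve_left hm2.ne'
      refine ⟨η 1, ?_⟩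
      funext i
      fin_cases i <;> simp [h0]
    · rintro ⟨t, rfl⟩
      exact ⟨Or.inr rfl, Subsingleton.elim _ _⟩
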